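/- arXiv:2404.01307 — 2 statements merged into one kernel-verified Lean document; each statement's English description precedes it below -/
import Mathlib

section
/- (Corollary 3, case m = 4.) Let n₀, n₁ be positive integers with gcd(n₀, n₁) = 1, and suppose n₁ is a prime with n₁ ≡ 1 (mod 4). Then equation (2) with m = 4 has no integer polynomial solution, i.e. there are no polynomials x, y, z ∈ ℤ[λ] with positive values on the natural numbers satisfying 4/(n₀ + n₁·t) = 1/x(t) + 1/y(t) + 1/z(t) for every natural number t. -/
open Polynomial

/-- `x, y, z ∈ ℤ[λ]` form an integer polynomial solution of equation (2). -/
def IsIntPolySolution (m n₀ n₁ : ℤ) (x y z : Polynomial ℤ) : Prop :=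
  (∀ t : ℕ, 0 < x.eval (t : ℤ)) ∧ (∀ t : ℕ, 0 < y.eval (t : ℤ)) ∧
  (∀ t : ℕ, 0 < z.eval (t : ℤ)) ∧
  C m * (x * y * z) = (C n₀ + C n₁ * X) * (x * y + x * z + y * z)

/-!
Since `x`, `y`, `z` are positive on `ℕ`, their leading coefficients are positive, so the top
terms of `x * y + x * z + y * z` cannot cancel, and comparing degrees in
`4 x y z = n (x y + x z + y z)` shows that the polynomial of least degree, say `z`, is linear.
If `x` has degree at least two, comparing leading coefficients gives `4 lc z = n₁` or
`4 / n₁ = 1 / lc y + 1 / lc z`, both impossible for a prime `n₁ ≡ 1 (mod 4)`. If all three are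
linear, `n` is prime in `ℤ[λ]` because `gcd(n₀, n₁) = 1`, and dividing out one factor at a time
shows `x = a n`, `y = b n`, `z = c n` with positive integers `a, b, c`; then
`4 a b c = a b + b c + c a`, which is absurd.
-/

namespace Polynomial

open Filter in
theorem leadingCoeff_pos_of_forall_eval_natCast_pos {p : ℤ[X]}
    (hp : ∀ t : ℕ, 0 < p.eval (t : ℤ)) : 0 < p.leadingCoeff := by
  rcases Nat.eq_zero_or_pos p.natDegree with hdeg | hdeg
  · rw [leadingCoeff, hdeg, coeff_zero_eq_eval_zero]
    exact_mod_cast hp 0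
  by_contra! hlc
  have hinj : Function.Injective (Int.castRingHom ℝ) := Int.cast_injective
  set P : ℝ[X] := p.map (Int.castRingHom ℝ)
  have hP : Tendsto (fun t : ℕ ↦ P.eval (t : ℝ)) atTop atBot :=
    (P.tendsto_atBot_of_leadingCoeff_nonpos
      (by rw [degree_map_eq_of_injective hinj]; exact natDegree_pos_iff_degree_pos.mp hdeg)
      (by rw [leadingCoeff_map_of_injective hinj]; exact Int.cast_nonpos.mpr hlc)).comp
      tendsto_natCast_atTop_atTop
  obtain ⟨t, ht⟩ := (hP.eventually_lt_atBot 0).exists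
  simp only [P, eval_map, eval₂_at_natCast] at ht
  exact (hp t).not_gt (Int.cast_lt_zero.mp ht)

section OrderedSemiring

variable {R : Type*} [Semiring R] [PartialOrder R] [IsOrderedCancelAddMonoid R] {p q : R[X]}

theorem leadingCoeff_add_pos (hp : 0 < p.leadingCoeff) (hq : 0 < q.leadingCoeff) :
    0 < (p + q).leadingCoeff := by
  rcases lt_trichotomy p.natDegree q.natDegree with h | h | h
  · rwa [leadingCoeff_add_of_degree_lt (degree_lt_degree h)]
  · have hdeg : p.degree = q.degree := by
      rw [degree_eq_natDegree (leadingCoeff_ne_zero.mp hp.ne'),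
        degree_eq_natDegree (leadingCoeff_ne_zero.mp hq.ne'), h]
    rw [leadingCoeff_add_of_degree_eq hdeg (add_pos hp hq).ne']
    exact add_pos hp hq
  · rwa [leadingCoeff_add_of_degree_lt' (degree_lt_degree h)]

theorem natDegree_add_of_leadingCoeff_pos (hp : 0 < p.leadingCoeff) (hq : 0 < q.leadingCoeff) :
    (p + q).natDegree = max p.natDegree q.natDegree := by
  rcases lt_trichotomy p.natDegree q.natDegree with h | h | h
  · rw [natDegree_add_eq_right_of_natDegree_lt h, max_eq_right h.le]
  · have hdeg : p.degree = q.degree := by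
      rw [degree_eq_natDegree (leadingCoeff_ne_zero.mp hp.ne'),
        degree_eq_natDegree (leadingCoeff_ne_zero.mp hq.ne'), h]
    rw [← h, max_self]
    apply natDegree_eq_of_degree_eq
    rw [degree_add_eq_of_leadingCoeff_add_ne_zero (add_pos hp hq).ne', hdeg, max_self]
  · rw [natDegree_add_eq_left_of_natDegree_lt h, max_eq_left h.le]

end OrderedSemiring

theorem exists_eq_C_mul_of_dvd_of_natDegree_le {R : Type*} [CommRing R] [IsDomain R]
    {p q : R[X]} (hdvd : q ∣ p) (hdeg : p.natDegree ≤ q.natDegree) : ∃ c, p = C c * q := by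
  obtain ⟨r, rfl⟩ := hdvd
  rcases eq_or_ne (q * r) 0 with h0 | h0
  · exact ⟨0, by simp [h0]⟩
  obtain ⟨hq, hr⟩ := mul_ne_zero_iff.mp h0
  rw [natDegree_mul hq hr] at hdeg
  exact ⟨r.coeff 0, by rw [mul_comm, ← eq_C_of_natDegree_eq_zero (by omega)]⟩

theorem not_dvd_C_of_natDegree_pos {R : Type*} [CommRing R] [IsDomain R] {q : R[X]}
    (hq : 0 < q.natDegree) {a : R} (ha : a ≠ 0) : ¬ q ∣ C a := fun h ↦ by
  simpa [hq.ne'] using natDegree_le_of_dvd h (C_ne_zero.mpr ha)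

theorem natDegree_C_add_C_mul_X {R : Type*} [Semiring R] {a b : R} (hb : b ≠ 0) :
    (C a + C b * X).natDegree = 1 := by
  rw [add_comm, natDegree_linear hb]

theorem leadingCoeff_C_add_C_mul_X {R : Type*} [Semiring R] {a b : R} (hb : b ≠ 0) :
    (C a + C b * X).leadingCoeff = b := by
  rw [add_comm, leadingCoeff_linear hb]

theorem prime_C_add_C_mul_X {a b : ℤ} (hb : b ≠ 0) (hab : Int.gcd a b = 1) :
    Prime (C a + C b * X) := by
  rw [add_comm]
  refine (irreducible_C_mul_X_add_C hb ?_).prime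
  exact (Int.isCoprime_iff_gcd_eq_one.mpr (by rwa [Int.gcd_comm])).isRelPrime

theorem exists_pos_eq_C_mul_of_C_add_C_mul_X_dvd {n₀ n₁ : ℤ} {p : ℤ[X]} (hn₁ : 0 < n₁)
    (hp : p.natDegree ≤ 1) (hlc : 0 < p.leadingCoeff) (hdvd : C n₀ + C n₁ * X ∣ p) :
    ∃ c, 0 < c ∧ p = C c * (C n₀ + C n₁ * X) := by
  obtain ⟨c, rfl⟩ :=
    exists_eq_C_mul_of_dvd_of_natDegree_le hdvd (by rwa [natDegree_C_add_C_mul_X hn₁.ne'])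
  rw [leadingCoeff_mul, leadingCoeff_C, leadingCoeff_C_add_C_mul_X hn₁.ne'] at hlc
  exact ⟨c, pos_of_mul_pos_left hlc hn₁.le, rfl⟩

end Polynomial

theorem Int.four_mul_mul_ne_mul_add {p b c : ℤ} (hp : Prime p) (hp0 : 0 < p) (hp4 : p % 4 = 1)
    (hb : 0 < b) (hc : 0 < c) : 4 * b * c ≠ p * (b + c) := by
  intro h
  wlog hpb : p ∣ b generalizing b c
  · have hp_not_dvd_four : ¬ p ∣ 4 := fun hdvd ↦ by
      have := Int.le_of_dvd (by norm_num) hdvd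
      have := hp.ne_one
      omega
    rcases hp.dvd_or_dvd (⟨b + c, h⟩ : p ∣ 4 * b * c) with hpc | hpc
    · exact (hp.dvd_or_dvd hpc).elim hp_not_dvd_four hpb
    · exact this hc hb (by linear_combination h) hpc
  obtain ⟨b, rfl⟩ := hpb
  have hb : 0 < b := pos_of_mul_pos_right hb hp0.le
  have h' : c * (4 * b - 1) = p * b := mul_left_cancel₀ hp0.ne' (by linear_combination h)
  -- `4 b - 1 ≥ 3` is coprime to `b`, so it divides the prime `p` and must equal it;
  -- but `p ≡ 1 (mod 4)`.
  obtain ⟨e, he⟩ : 4 * b - 1 ∣ p :=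
    (IsCoprime.dvd_of_dvd_mul_right ⟨-1, 4, by ring⟩ ⟨c, by rw [← h', mul_comm]⟩)
  rcases hp.irreducible.isUnit_or_isUnit he with hu | hu
  · rcases Int.isUnit_iff.mp hu with hu | hu <;> omega
  · rcases Int.isUnit_iff.mp hu with rfl | rfl <;> omega

/-- What remains of `m / N = 1 / x + 1 / y + 1 / z`, with `N = C n₀ + C n₁ * X`, once `z = c N`. -/
theorem false_of_linear_of_C_mul_eq {m n₀ n₁ c : ℤ} {x y : ℤ[X]} (hm : 3 < m) (hn₁ : 0 < n₁)
    (hcop : Int.gcd n₀ n₁ = 1) (hc : 0 < c) (hx : x.natDegree ≤ 1) (hy : y.natDegree ≤ 1)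
    (hlx : 0 < x.leadingCoeff) (hly : 0 < y.leadingCoeff)
    (heq : C (m * c - 1) * (x * y) = (C n₀ + C n₁ * X) * (C c * (x + y))) : False := by
  set N := C n₀ + C n₁ * X
  have hN : Prime N := prime_C_add_C_mul_X hn₁.ne' hcop
  have hNC : ∀ {a : ℤ}, a ≠ 0 → ¬ N ∣ C a :=
    not_dvd_C_of_natDegree_pos (by rw [natDegree_C_add_C_mul_X hn₁.ne']; norm_num)
  have hm4 : 4 ≤ m := hm
  wlog hNx : N ∣ x generalizing x y
  · rcases hN.dvd_or_dvd ⟨_, heq⟩ with hdvd | hdvd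
    · exact hNC (by nlinarith) hdvd
    rcases hN.dvd_or_dvd hdvd with hdvd | hdvd
    · exact hNx hdvd
    · exact this hy hx hly hlx (by linear_combination heq) hdvd
  obtain ⟨a, ha, rfl⟩ := exists_pos_eq_C_mul_of_C_add_C_mul_X_dvd hn₁ hx hlx hNx
  have heq' : C (m * a * c - a - c) * y = N * C (a * c) :=
    mul_left_cancel₀ hN.ne_zero (by
      simp only [map_sub, map_mul, map_one] at heq ⊢
      linear_combination heq)
  obtain ⟨b, hb, rfl⟩ := exists_pos_eq_C_mul_of_C_add_C_mul_X_dvd hn₁ hy hly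
    ((hN.dvd_or_dvd ⟨_, heq'⟩).resolve_left (hNC (by nlinarith [mul_pos ha hc])))
  have habc : (m * a * c - a - c) * b = a * c := C_injective
    (mul_left_cancel₀ hN.ne_zero (by
      simp only [map_sub, map_mul] at heq' ⊢
      linear_combination heq'))
  nlinarith [mul_pos (mul_pos ha hb) hc, mul_pos ha hb, mul_pos hb hc, mul_pos ha hc]

namespace IsIntPolySolution

variable {m n₀ n₁ : ℤ} {x y z : ℤ[X]}

theorem swap_left (h : IsIntPolySolution m n₀ n₁ x y z) : IsIntPolySolution m n₀ n₁ y x z :=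
  ⟨h.2.1, h.1, h.2.2.1, by linear_combination h.2.2.2⟩

theorem swap_right (h : IsIntPolySolution m n₀ n₁ x y z) : IsIntPolySolution m n₀ n₁ x z y :=
  ⟨h.1, h.2.2.1, h.2.1, by linear_combination h.2.2.2⟩

theorem leadingCoeff_pos (h : IsIntPolySolution m n₀ n₁ x y z) :
    0 < x.leadingCoeff ∧ 0 < y.leadingCoeff ∧ 0 < z.leadingCoeff :=
  ⟨leadingCoeff_pos_of_forall_eval_natCast_pos h.1,
    leadingCoeff_pos_of_forall_eval_natCast_pos h.2.1,
    leadingCoeff_pos_of_forall_eval_natCast_pos h.2.2.1⟩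

theorem eq_mul_add_mul (h : IsIntPolySolution m n₀ n₁ x y z) :
    C m * (x * y * z) = (C n₀ + C n₁ * X) * (x * (y + z) + y * z) := by
  linear_combination h.2.2.2

theorem natDegree_eq_one (h : IsIntPolySolution m n₀ n₁ x y z) (hm : m ≠ 0) (hn₁ : n₁ ≠ 0)
    (hzx : z.natDegree ≤ x.natDegree) (hzy : z.natDegree ≤ y.natDegree) : z.natDegree = 1 := by
  obtain ⟨hx, hy, hz⟩ := h.leadingCoeff_pos
  have hx0 := leadingCoeff_ne_zero.mp hx.ne'
  have hy0 := leadingCoeff_ne_zero.mp hy.ne'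
  have hz0 := leadingCoeff_ne_zero.mp hz.ne'
  have hl_add := leadingCoeff_add_pos hy hz
  have hl_left : 0 < (x * (y + z)).leadingCoeff := by rw [leadingCoeff_mul]; positivity
  have hl_right : 0 < (y * z).leadingCoeff := by rw [leadingCoeff_mul]; positivity
  have hN0 : C n₀ + C n₁ * X ≠ 0 :=
    leadingCoeff_ne_zero.mp (by rwa [leadingCoeff_C_add_C_mul_X hn₁])
  have hdeg := congrArg natDegree h.eq_mul_add_mul
  rw [natDegree_C_mul hm, natDegree_mul (mul_ne_zero hx0 hy0) hz0, natDegree_mul hx0 hy0,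
    natDegree_mul hN0 (leadingCoeff_ne_zero.mp (leadingCoeff_add_pos hl_left hl_right).ne'),
    natDegree_C_add_C_mul_X hn₁, natDegree_add_of_leadingCoeff_pos hl_left hl_right,
    natDegree_mul hx0 (leadingCoeff_ne_zero.mp hl_add.ne'),
    natDegree_add_of_leadingCoeff_pos hy hz, natDegree_mul hy0 hz0] at hdeg
  omega

theorem natDegree_le_one (h : IsIntPolySolution 4 n₀ n₁ x y z) (hn₁ : 0 < n₁) (hprime : Prime n₁)
    (hmod : n₁ % 4 = 1) (hz1 : z.natDegree = 1) (hzy : z.natDegree ≤ y.natDegree) :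
    x.natDegree ≤ 1 := by
  by_contra! hx2
  obtain ⟨hx, hy, hz⟩ := h.leadingCoeff_pos
  have hx0 := leadingCoeff_ne_zero.mp hx.ne'
  have hy0 := leadingCoeff_ne_zero.mp hy.ne'
  have hz0 := leadingCoeff_ne_zero.mp hz.ne'
  have hl_add := leadingCoeff_add_pos hy hz
  have hdyz : (y + z).natDegree = y.natDegree := by
    rw [natDegree_add_of_leadingCoeff_pos hy hz]
    omega
  have hlt : (y * z).degree < (x * (y + z)).degree := degree_lt_degree (by
    rw [natDegree_mul hy0 hz0, natDegree_mul hx0 (leadingCoeff_ne_zero.mp hl_add.ne'), hdyz]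
    omega)
  have hlc := congrArg leadingCoeff h.eq_mul_add_mul
  simp only [leadingCoeff_mul, leadingCoeff_add_of_degree_lt' hlt, leadingCoeff_C,
    leadingCoeff_C_add_C_mul_X hn₁.ne'] at hlc
  have key : 4 * (y.leadingCoeff * z.leadingCoeff) = n₁ * (y + z).leadingCoeff :=
    mul_left_cancel₀ hx.ne' (by linear_combination hlc)
  rcases hzy.eq_or_lt with hyz | hyz
  · have hdeg : y.degree = z.degree := by
      rw [degree_eq_natDegree hy0, degree_eq_natDegree hz0, hyz]
    rw [leadingCoeff_add_of_degree_eq hdeg (add_pos hy hz).ne'] at key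
    exact Int.four_mul_mul_ne_mul_add hprime hn₁ hmod hy hz (by linear_combination key)
  · rw [leadingCoeff_add_of_degree_lt' (degree_lt_degree hyz)] at key
    have : n₁ = 4 * z.leadingCoeff := mul_right_cancel₀ hy.ne' (by linear_combination -key)
    omega

theorem false_of_natDegree_le_one (h : IsIntPolySolution m n₀ n₁ x y z) (hm : 3 < m)
    (hn₁ : 0 < n₁) (hcop : Int.gcd n₀ n₁ = 1) (hx : x.natDegree ≤ 1) (hy : y.natDegree ≤ 1)
    (hz : z.natDegree ≤ 1) : False := by
  set N := C n₀ + C n₁ * X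
  have hN : Prime N := prime_C_add_C_mul_X hn₁.ne' hcop
  wlog hNz : N ∣ z generalizing x y z
  · rcases hN.dvd_or_dvd ⟨_, h.2.2.2⟩ with hdvd | hdvd
    · exact not_dvd_C_of_natDegree_pos (by rw [natDegree_C_add_C_mul_X hn₁.ne']; norm_num)
        (by omega) hdvd
    rcases hN.dvd_or_dvd hdvd with hdvd | hdvd
    · rcases hN.dvd_or_dvd hdvd with hdvd | hdvd
      · exact this h.swap_right.swap_left.swap_right hz hy hx hdvd
      · exact this h.swap_right hx hz hy hdvd
    · exact hNz hdvd
  obtain ⟨hlx, hly, hlz⟩ := h.leadingCoeff_pos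
  obtain ⟨c, hc, rfl⟩ := exists_pos_eq_C_mul_of_C_add_C_mul_X_dvd hn₁ hz hlz hNz
  exact false_of_linear_of_C_mul_eq hm hn₁ hcop hc hx hy hlx hly
    (mul_left_cancel₀ hN.ne_zero (by
      simp only [map_sub, map_mul, map_one]
      linear_combination h.2.2.2))

end IsIntPolySolution

theorem corollary3_general (n₀ n₁ : ℤ) (hn₁ : 0 < n₁)
    (hcop : Int.gcd n₀ n₁ = 1) (hprime : Prime n₁) (hmod : n₁ % 4 = 1) :
    ¬ ∃ x y z : Polynomial ℤ, IsIntPolySolution 4 n₀ n₁ x y z := by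
  rintro ⟨x, y, z, h⟩
  wlog hzy : z.natDegree ≤ y.natDegree generalizing y z
  · exact this z y h.swap_right (le_of_not_ge hzy)
  wlog hzx : z.natDegree ≤ x.natDegree generalizing x z
  · exact this z x h.swap_right.swap_left.swap_right (by omega) (le_of_not_ge hzx)
  have hz := h.natDegree_eq_one (by norm_num) hn₁.ne' hzx hzy
  exact h.false_of_natDegree_le_one (by norm_num) hn₁ hcop
    (h.natDegree_le_one hn₁ hprime hmod hz hzy)
    (h.swap_left.natDegree_le_one hn₁ hprime hmod hz hzx) hz.le

/-- Corollary 3 for `m = 4`: a prime modulus `n₁ ≡ 1 (mod 4)` admits no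
integer polynomial solution of equation (2). -/
theorem corollary3 (n₀ n₁ : ℤ) (hn₀ : 0 < n₀) (hn₁ : 0 < n₁)
    (hcop : Int.gcd n₀ n₁ = 1) (hprime : Prime n₁) (hmod : n₁ % 4 = 1) :
    ¬ ∃ x y z : Polynomial ℤ, IsIntPolySolution 4 n₀ n₁ x y z :=
  corollary3_general n₀ n₁ hn₁ hcop hprime hmod
end

section
/- (Case A is impossible.) Let m, n₀, n₁ be positive integers with m ≥ 4 and gcd(n₀, n₁) = 1. Then there is no integer polynomial solution x, y, z of equation (2) in which all three polynomials x, y, z have degree 1. -/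
open Polynomial

section Domain

variable {R : Type*} [CommRing R] {π m x y z c d e : R}

theorem Prime.dvd_or_dvd_or_dvd_of_mul_eq (hπ : Prime π) (hm : ¬π ∣ m)
    (h : m * (x * y * z) = π * (x * y + x * z + y * z)) : π ∣ x ∨ π ∣ y ∨ π ∣ z := by
  have hxyz : π ∣ m * (x * y * z) := h ▸ dvd_mul_right _ _
  rcases hπ.dvd_or_dvd hxyz with hπm | hπxyz
  · exact absurd hπm hm
  rcases hπ.dvd_or_dvd hπxyz with hπxy | hπz
  · exact (hπ.dvd_or_dvd hπxy).imp_right Or.inl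
  · exact Or.inr (Or.inr hπz)

variable [IsDomain R]

theorem cancel_one_factor (hπ : π ≠ 0) (h : m * (x * y * z) = π * (x * y + x * z + y * z))
    (hx : x = c * π) : (m * c - 1) * (y * z) = π * (c * (y + z)) :=
  mul_left_cancel₀ hπ (by subst hx; linear_combination h)

theorem cancel_two_factors (hπ : π ≠ 0) (h : m * (x * y * z) = π * (x * y + x * z + y * z))
    (hx : x = c * π) (hy : y = d * π) : (m * c * d - c - d) * z = π * (c * d) :=
  mul_left_cancel₀ hπ (by
    have h₁ := cancel_one_factor hπ h hx
    subst hy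
    linear_combination h₁)

theorem cancel_three_factors (hπ : π ≠ 0) (h : m * (x * y * z) = π * (x * y + x * z + y * z))
    (hx : x = c * π) (hy : y = d * π) (hz : z = e * π) : m * (c * d * e) = c * d + c * e + d * e :=
  mul_left_cancel₀ hπ (by
    have h₂ := cancel_two_factors hπ h hx hy
    subst hz
    linear_combination h₂)

end Domain

theorem le_three_of_mul_eq {m c d e : ℤ} (hc : 0 < c) (hd : 0 < d) (he : 0 < e)
    (h : m * (c * d * e) = c * d + c * e + d * e) : m ≤ 3 := by
  have hcde : 0 < c * d * e := by positivity
  refine le_of_mul_le_mul_right ?_ hcde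
  nlinarith [mul_le_mul_of_nonneg_left he (mul_pos hc hd).le,
    mul_le_mul_of_nonneg_left hd (mul_pos hc he).le,
    mul_le_mul_of_nonneg_left hc (mul_pos hd he).le]

namespace Polynomial

theorem prime_C_add_C_mul_X_s10 {n₀ n₁ : ℤ} (hn₁ : n₁ ≠ 0) (hcop : Int.gcd n₀ n₁ = 1) :
    Prime (C n₀ + C n₁ * X) := by
  rw [add_comm]
  refine (irreducible_C_mul_X_add_C hn₁ ?_).prime
  exact (Int.isCoprime_iff_gcd_eq_one.mpr (by rwa [Int.gcd_comm])).isRelPrime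

variable {π p : ℤ[X]}

theorem not_dvd_C_of_natDegree_eq_one (hπ : π.natDegree = 1) {k : ℤ} (hk : k ≠ 0) :
    ¬π ∣ C k := fun hdvd => by
  simpa [hπ] using natDegree_le_of_dvd hdvd (C_ne_zero.mpr hk)

theorem exists_pos_C_mul_of_dvd (hπ : π.natDegree = 1) (hπ0 : 0 < π.eval 0)
    (hp : p.natDegree = 1) (hp0 : 0 < p.eval 0) (hπp : π ∣ p) :
    ∃ c : ℤ, 0 < c ∧ p = C c * π := by
  obtain ⟨q, rfl⟩ := hπp
  have hq : q ≠ 0 := by rintro rfl; simp at hp0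
  have hq0 : q.natDegree = 0 := by
    rw [natDegree_mul (by rintro rfl; simp at hπ) hq, hπ] at hp; omega
  rw [eq_C_of_natDegree_eq_zero hq0, eval_mul, eval_C] at hp0
  exact ⟨q.coeff 0, pos_of_mul_pos_right hp0 hπ0.le,
    by rw [mul_comm, ← eq_C_of_natDegree_eq_zero hq0]⟩

variable (hπ : Prime π) (hπ1 : π.natDegree = 1) (hπ0 : 0 < π.eval 0)
include hπ hπ1 hπ0

theorem false_of_eq_C_mul_of_eq_C_mul {m c d : ℤ} {x y z : ℤ[X]} (hm : 4 ≤ m)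
    (hc : 0 < c) (hd : 0 < d) (hz1 : z.natDegree = 1) (hz0 : 0 < z.eval 0)
    (h : C m * (x * y * z) = π * (x * y + x * z + y * z))
    (hx : x = C c * π) (hy : y = C d * π) : False := by
  have hπz : π ∣ C (m * c * d - c - d) * z := by
    rw [show C (m * c * d - c - d) = C m * C c * C d - C c - C d by simp]
    exact ⟨_, cancel_two_factors hπ.ne_zero h hx hy⟩
  have hmcd : m * c * d - c - d ≠ 0 := by nlinarith [mul_pos hc hd]
  obtain ⟨e, he, hz⟩ := exists_pos_C_mul_of_dvd hπ1 hπ0 hz1 hz0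
    ((hπ.dvd_or_dvd hπz).resolve_left (not_dvd_C_of_natDegree_eq_one hπ1 hmcd))
  have hcde := cancel_three_factors hπ.ne_zero h hx hy hz
  simp only [← C_mul, ← C_add] at hcde
  have := le_three_of_mul_eq hc hd he (C_injective hcde)
  omega

theorem false_of_eq_C_mul {m c : ℤ} {x y z : ℤ[X]} (hm : 4 ≤ m) (hc : 0 < c)
    (hy1 : y.natDegree = 1) (hy0 : 0 < y.eval 0) (hz1 : z.natDegree = 1) (hz0 : 0 < z.eval 0)
    (h : C m * (x * y * z) = π * (x * y + x * z + y * z)) (hx : x = C c * π) : False := by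
  have hπyz : π ∣ C (m * c - 1) * (y * z) := by
    rw [show C (m * c - 1) = C m * C c - 1 by simp]
    exact ⟨_, cancel_one_factor hπ.ne_zero h hx⟩
  have hmc : m * c - 1 ≠ 0 := by have : m ≤ m * c := le_mul_of_one_le_right (by omega) hc; omega
  rcases hπ.dvd_or_dvd ((hπ.dvd_or_dvd hπyz).resolve_left
    (not_dvd_C_of_natDegree_eq_one hπ1 hmc)) with hπy | hπz
  · obtain ⟨d, hd, hy⟩ := exists_pos_C_mul_of_dvd hπ1 hπ0 hy1 hy0 hπy
    exact false_of_eq_C_mul_of_eq_C_mul hπ hπ1 hπ0 hm hc hd hz1 hz0 h hx hy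
  · obtain ⟨d, hd, hz⟩ := exists_pos_C_mul_of_dvd hπ1 hπ0 hz1 hz0 hπz
    exact false_of_eq_C_mul_of_eq_C_mul hπ hπ1 hπ0 hm hc hd hy1 hy0
      (by linear_combination h) hx hz

theorem false_of_mul_eq_of_natDegree_eq_one {m : ℤ} {x y z : ℤ[X]} (hm : 4 ≤ m)
    (hx1 : x.natDegree = 1) (hx0 : 0 < x.eval 0) (hy1 : y.natDegree = 1) (hy0 : 0 < y.eval 0)
    (hz1 : z.natDegree = 1) (hz0 : 0 < z.eval 0)
    (h : C m * (x * y * z) = π * (x * y + x * z + y * z)) : False := by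
  rcases hπ.dvd_or_dvd_or_dvd_of_mul_eq (not_dvd_C_of_natDegree_eq_one hπ1 (by omega)) h
    with hπx | hπy | hπz
  · obtain ⟨c, hc, hx⟩ := exists_pos_C_mul_of_dvd hπ1 hπ0 hx1 hx0 hπx
    exact false_of_eq_C_mul hπ hπ1 hπ0 hm hc hy1 hy0 hz1 hz0 h hx
  · obtain ⟨c, hc, hy⟩ := exists_pos_C_mul_of_dvd hπ1 hπ0 hy1 hy0 hπy
    exact false_of_eq_C_mul hπ hπ1 hπ0 hm hc hx1 hx0 hz1 hz0 (by linear_combination h) hy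
  · obtain ⟨c, hc, hz⟩ := exists_pos_C_mul_of_dvd hπ1 hπ0 hz1 hz0 hπz
    exact false_of_eq_C_mul hπ hπ1 hπ0 hm hc hx1 hx0 hy1 hy0 (by linear_combination h) hz

end Polynomial

/-- Case A is impossible: no integer polynomial solution of (2) has all three
polynomials of degree 1. -/
theorem caseA_impossible (m n₀ n₁ : ℤ) (hm : 4 ≤ m) (hn₀ : 0 < n₀) (hn₁ : 0 < n₁)
    (hcop : Int.gcd n₀ n₁ = 1) :
    ¬ ∃ x y z : Polynomial ℤ, IsIntPolySolution m n₀ n₁ x y z ∧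
      x.natDegree = 1 ∧ y.natDegree = 1 ∧ z.natDegree = 1 := by
  rintro ⟨x, y, z, ⟨hx, hy, hz, h⟩, hx1, hy1, hz1⟩
  have hπ1 : (C n₀ + C n₁ * X).natDegree = 1 := by
    rw [add_comm]; exact natDegree_linear hn₁.ne'
  exact false_of_mul_eq_of_natDegree_eq_one (prime_C_add_C_mul_X_s10 hn₁.ne' hcop) hπ1
    (by simpa using hn₀) hm hx1 (by simpa using hx 0) hy1 (by simpa using hy 0) hz1
    (by simpa using hz 0) h
end
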